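/- Squared volume formula for constant metric: let G = Hᵀ·H with H an invertible n×n real matrix, and let x₀,...,x_n be points of ℝⁿ with Y the n×n matrix of columns x_i − x₀. Then (1/n!²)·det(Yᵀ·G·Y) = −(−2)^{-n}·(1/n!²)·det(C_G), where C_G is the Cayley–Menger matrix built from the G-squared-distances (x_i−x_j)ᵀ·G·(x_i−x_j). -/

import Mathlib

/-!
Splitting off the border row and column together with the vertex `x 0`, the Cayley–Menger
determinant is `-1` times the determinant of the Schur complement of the corner block
`!![0, 1; 1, d 0 0]`, whose entries are `d i j - d i 0 - d 0 j + d 0 0`. For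
`d i j = (x i - x j)ᵀ G (x i - x j)` with `G` symmetric, polarization turns these entries into
`-2 (x i - x 0)ᵀ G (x j - x 0)`: the complement is `-2 • Yᵀ G Y`.
-/

open Matrix

/-- The Cayley–Menger matrix of a squared-distance function `g`. -/
def cayleyMenger {R : Type*} [CommRing R] {k : ℕ} (g : Fin (k+1) → Fin (k+1) → R) :
    Matrix (Option (Fin (k+1))) (Option (Fin (k+1))) R :=
  fun i j =>
    match i, j with
    | none, none => 0
    | none, some _ => 1
    | some _, none => 1
    | some i, some j => g i j

variable {R ι : Type*} [CommRing R]

def finTwoSumEquivOptionFinSucc (k : ℕ) : Fin 2 ⊕ Fin k ≃ Option (Fin (k+1)) where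
  toFun
    | .inl ⟨0, _⟩ => none
    | .inl ⟨1, _⟩ => some 0
    | .inr i => some i.succ
  invFun
    | none => .inl 0
    | some j => Fin.cases (.inl 1) .inr j
  left_inv := by
    rintro (a | i)
    · fin_cases a <;> rfl
    · simp
  right_inv := by
    rintro (_ | j)
    · rfl
    · induction j using Fin.cases <;> simp

theorem det_cayleyMenger {k : ℕ} (g : Fin (k+1) → Fin (k+1) → R) :
    (cayleyMenger g).det =
      -(of fun i j : Fin k => g i.succ j.succ - g i.succ 0 - g 0 j.succ + g 0 0).det := by
  let _ : Invertible !![0, 1; 1, g 0 0] :=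
    { invOf := !![-g 0 0, 1; 1, 0]
      invOf_mul_self := by ext i j; fin_cases i <;> fin_cases j <;> simp [mul_apply]
      mul_invOf_self := by ext i j; fin_cases i <;> fin_cases j <;> simp [mul_apply] }
  have hblocks : (cayleyMenger g).submatrix (finTwoSumEquivOptionFinSucc k)
      (finTwoSumEquivOptionFinSucc k) =
      fromBlocks !![0, 1; 1, g 0 0] (of fun i j => if i = 0 then 1 else g 0 j.succ)
        (of fun i j => if j = 0 then 1 else g i.succ 0) (of fun i j => g i.succ j.succ) := by
    ext (a | i) (b | j)
    · fin_cases a <;> fin_cases b <;> rfl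
    · fin_cases a <;> rfl
    · fin_cases b <;> rfl
    · rfl
  rw [← det_submatrix_equiv_self (finTwoSumEquivOptionFinSucc k), hblocks, det_fromBlocks₁₁,
    det_fin_two_of, show ⅟!![0, 1; 1, g 0 0] = !![-g 0 0, 1; 1, 0] from rfl]
  simp only [zero_mul, one_mul, zero_sub, neg_one_mul]
  congr 2
  ext i j
  simp [mul_apply, Fin.sum_univ_two]
  ring

def edgeMatrix {k : ℕ} (x : Fin (k+1) → ι → R) : Matrix ι (Fin k) R :=
  of fun r i => (x i.succ - x 0) r

theorem transpose_edgeMatrix_apply {k : ℕ} (x : Fin (k+1) → ι → R) (i : Fin k) :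
    (edgeMatrix x)ᵀ i = x i.succ - x 0 :=
  rfl

variable [Fintype ι]

theorem Matrix.transpose_mul_mul_apply {k : Type*} (G : Matrix ι ι R) (Y : Matrix ι k R)
    (i j : k) : (Yᵀ * G * Y) i j = Yᵀ i ⬝ᵥ G *ᵥ Yᵀ j := by
  rw [Matrix.mul_assoc, mul_apply, dotProduct]
  rfl

theorem Matrix.IsSymm.dotProduct_mulVec_comm {G : Matrix ι ι R} (hG : G.IsSymm) (u v : ι → R) :
    u ⬝ᵥ G *ᵥ v = v ⬝ᵥ G *ᵥ u := by
  rw [dotProduct_mulVec, dotProduct_comm, ← mulVec_transpose, hG.eq]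

theorem Matrix.IsSymm.sub_dotProduct_mulVec_sub {G : Matrix ι ι R} (hG : G.IsSymm)
    (u v : ι → R) :
    (u - v) ⬝ᵥ G *ᵥ (u - v) = u ⬝ᵥ G *ᵥ u - 2 * (u ⬝ᵥ G *ᵥ v) + v ⬝ᵥ G *ᵥ v := by
  rw [mulVec_sub, dotProduct_sub, sub_dotProduct, sub_dotProduct, hG.dotProduct_mulVec_comm v u]
  ring

theorem det_cayleyMenger_dotProduct_mulVec {k : ℕ} {G : Matrix ι ι R} (hG : G.IsSymm)
    (x : Fin (k+1) → ι → R) :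
    (cayleyMenger fun i j => (x i - x j) ⬝ᵥ G *ᵥ (x i - x j)).det =
      -(-2) ^ k * ((edgeMatrix x)ᵀ * G * edgeMatrix x).det := by
  calc _ = -((-2 : R) • ((edgeMatrix x)ᵀ * G * edgeMatrix x)).det := by
        rw [det_cayleyMenger]
        congr 2
        ext i j
        have hsplit : x i.succ - x j.succ = (x i.succ - x 0) - (x j.succ - x 0) := by abel
        have hflip : x 0 - x j.succ = -(x j.succ - x 0) := by abel
        rw [of_apply, Matrix.smul_apply, transpose_mul_mul_apply, transpose_edgeMatrix_apply,
          transpose_edgeMatrix_apply, hsplit, hflip, hG.sub_dotProduct_mulVec_sub, sub_self,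
          mulVec_neg, neg_dotProduct, dotProduct_neg, neg_neg, zero_dotProduct, smul_eq_mul]
        ring
    _ = _ := by rw [det_smul, Fintype.card_fin, neg_mul]

theorem squared_volume_constant_metric_general {n : ℕ}
    (G H : Matrix (Fin n) (Fin n) ℝ) (hG : G = Hᵀ * H)
    (x : Fin (n+1) → (Fin n → ℝ))
    (Y : Matrix (Fin n) (Fin n) ℝ) (hY : Y = Matrix.of fun r i => (x i.succ - x 0) r) :
    (1 / (Nat.factorial n : ℝ)^2) * (Yᵀ * G * Y).det =
      -((-2 : ℝ)^n)⁻¹ * (1 / (Nat.factorial n : ℝ)^2) *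
        (cayleyMenger (fun i j =>
          dotProduct (x i - x j) (G.mulVec (x i - x j)))).det := by
  have hGsymm : G.IsSymm := hG ▸ isSymm_transpose_mul_self H
  rw [det_cayleyMenger_dotProduct_mulVec hGsymm x, show edgeMatrix x = Y from hY.symm]
  have : (-2 : ℝ) ^ n ≠ 0 := by positivity
  field_simp

theorem squared_volume_constant_metric {n : ℕ}
    (G H : Matrix (Fin n) (Fin n) ℝ) (hG : G = Hᵀ * H) (hH : IsUnit H.det)
    (x : Fin (n+1) → (Fin n → ℝ))
    (Y : Matrix (Fin n) (Fin n) ℝ) (hY : Y = Matrix.of fun r i => (x i.succ - x 0) r) :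
    (1 / (Nat.factorial n : ℝ)^2) * (Yᵀ * G * Y).det =
      -((-2 : ℝ)^n)⁻¹ * (1 / (Nat.factorial n : ℝ)^2) *
        (cayleyMenger (fun i j =>
          dotProduct (x i - x j) (G.mulVec (x i - x j)))).det :=
  squared_volume_constant_metric_general G H hG x Y hY
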